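/- arXiv:cs/0202015 — 5 statements merged into one kernel-verified Lean document; each statement's English description precedes it below -/
import Mathlib

section
/- The class of complement-free valuations is closed under the OR operation: if v₁ and v₂ are complement-free valuations on X, then the valuation (v₁∨v₂)(S) = max over subsets T ⊆ S of (v₁(T)+v₂(S∖T)) is complement-free. -/
/-- The OR combination of two valuations:
`(v₁ ∨ v₂)(S) = max over T ⊆ S of v₁(T) + v₂(S∖T)`. -/
noncomputable def orVal {X : Type*} [DecidableEq X]
    (v₁ v₂ : Finset X → ℝ) (S : Finset X) : ℝ :=
  S.powerset.sup' (Finset.powerset_nonempty S) (fun T => v₁ T + v₂ (S \ T))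

/-
A split `T`, `(A ∪ B) \ T` of `A ∪ B` restricts to the splits `T ∩ A`, `A \ T` of `A` and
`T ∩ B`, `B \ T` of `B`; these pieces cover `T` and `(A ∪ B) \ T` exactly, so subadditivity of
`v₁` and `v₂` alone bounds each term of the maximum.
-/

theorem le_orVal {X : Type*} [DecidableEq X] (v₁ v₂ : Finset X → ℝ) {S T : Finset X}
    (hT : T ⊆ S) : v₁ T + v₂ (S \ T) ≤ orVal v₁ v₂ S :=
  Finset.le_sup' (fun T => v₁ T + v₂ (S \ T)) (Finset.mem_powerset.mpr hT)

theorem complementFree_closed_under_or_general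
    {X : Type*} [DecidableEq X]
    (v₁ v₂ : Finset X → ℝ)
    (hcf1 : ∀ A B : Finset X, v₁ (A ∪ B) ≤ v₁ A + v₁ B)
    (hcf2 : ∀ A B : Finset X, v₂ (A ∪ B) ≤ v₂ A + v₂ B) :
    ∀ A B : Finset X, orVal v₁ v₂ (A ∪ B) ≤ orVal v₁ v₂ A + orVal v₁ v₂ B := by
  intro A B
  refine Finset.sup'_le _ _ fun T hT => ?_
  have hsplit : T ∩ A ∪ T ∩ B = T := by
    rw [← Finset.inter_union_distrib_left, Finset.inter_eq_left.mpr (Finset.mem_powerset.mp hT)]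
  calc v₁ T + v₂ ((A ∪ B) \ T)
      = v₁ (T ∩ A ∪ T ∩ B) + v₂ (A \ T ∪ B \ T) := by rw [hsplit, Finset.union_sdiff_distrib]
    _ ≤ (v₁ (T ∩ A) + v₂ (A \ (T ∩ A))) + (v₁ (T ∩ B) + v₂ (B \ (T ∩ B))) := by
      rw [Finset.sdiff_inter_self_right, Finset.sdiff_inter_self_right]
      linarith [hcf1 (T ∩ A) (T ∩ B), hcf2 (A \ T) (B \ T)]
    _ ≤ orVal v₁ v₂ A + orVal v₁ v₂ B :=
      add_le_add (le_orVal v₁ v₂ Finset.inter_subset_right)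
        (le_orVal v₁ v₂ Finset.inter_subset_right)

/-- Complement-free valuations are closed under OR. -/
theorem complementFree_closed_under_or
    {X : Type*} [DecidableEq X] [Fintype X]
    (v₁ v₂ : Finset X → ℝ)
    (h01 : v₁ ∅ = 0) (h02 : v₂ ∅ = 0)
    (hmono1 : ∀ A B : Finset X, A ⊆ B → v₁ A ≤ v₁ B)
    (hmono2 : ∀ A B : Finset X, A ⊆ B → v₂ A ≤ v₂ B)
    (hnn1 : ∀ A : Finset X, 0 ≤ v₁ A)
    (hnn2 : ∀ A : Finset X, 0 ≤ v₂ A)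
    (hcf1 : ∀ A B : Finset X, v₁ (A ∪ B) ≤ v₁ A + v₁ B)
    (hcf2 : ∀ A B : Finset X, v₂ (A ∪ B) ≤ v₂ A + v₂ B) :
    ∀ A B : Finset X, orVal v₁ v₂ (A ∪ B) ≤ orVal v₁ v₂ A + orVal v₁ v₂ B :=
  complementFree_closed_under_or_general v₁ v₂ hcf1 hcf2
end

section
/- Every submodular valuation v on a finite set X can be represented as an XOR of additive valuations: v(S) = max over permutations π of X of Σ_{j : π(j) ∈ S} v(π(j) | {π(1),…,π(j−1)}), where the maximum is attained. In particular, for each set A there is a permutation placing the elements of A first whose associated additive clause gives A the value v(A), and every other clause gives A a value at most v(A). -/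
/-!
Pricing the items of `A` in the order `π` at their marginal values given all earlier
items is, by submodularity, no more than pricing them at their marginal values given only the
earlier items of `A`; the latter prices telescope to `v A - v ∅`. When `π` lists `A` first, the
earlier items of every element of `A` all lie in `A`, so the two pricings agree.
-/

open Finset

/-- The value given to a set `A` by the additive (OR) clause associated with a
permutation `π` of the items: each item `π j` is priced at its marginal value
given the items preceding it in `π`, and `A` is valued at the sum of the prices
of its elements. -/
noncomputable def permClause {m : ℕ} (v : Finset (Fin m) → ℝ)
    (π : Equiv.Perm (Fin m)) (A : Finset (Fin m)) : ℝ :=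
  ∑ j ∈ Finset.univ.filter (fun j => π j ∈ A),
    (v ((Finset.Iic j).image π) - v ((Finset.Iio j).image π))

def IsSubmodular {α : Type*} [DecidableEq α] (v : Finset α → ℝ) : Prop :=
  ∀ A B : Finset α, v (A ∪ B) + v (A ∩ B) ≤ v A + v B

theorem IsSubmodular.insert_sub_le_insert_sub {α : Type*} [DecidableEq α] {v : Finset α → ℝ}
    (hv : IsSubmodular v) {S T : Finset α} (hST : S ⊆ T) {x : α} (hx : x ∉ T) :
    v (insert x T) - v T ≤ v (insert x S) - v S := by
  have hunion : T ∪ insert x S = insert x T := by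
    rw [union_insert, union_eq_left.mpr hST]
  have hinter : T ∩ insert x S = S := by
    rw [inter_insert_of_notMem hx, inter_eq_right.mpr hST]
  linarith [hunion ▸ hinter ▸ hv T (insert x S)]

theorem Fin.sum_Iic_sub_Iio {m : ℕ} {G : Type*} [AddCommGroup G] (g : Finset (Fin m) → G) :
    ∑ j : Fin m, (g (Iic j) - g (Iio j)) = g univ - g ∅ := by
  let prefixes (n : ℕ) : Finset (Fin m) := univ.filter fun i => (i : ℕ) < n
  have hIic (j : Fin m) : Iic j = prefixes (j + 1) := by ext i; simp [prefixes]
  have hIio (j : Fin m) : Iio j = prefixes j := by ext i; simp [prefixes]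
  have huniv : prefixes m = univ := by ext i; simp [prefixes]
  have hempty : prefixes 0 = ∅ := by ext i; simp [prefixes]
  simp only [hIic, hIio]
  rw [Fin.sum_univ_eq_sum_range (fun n => g (prefixes (n + 1)) - g (prefixes n)),
    sum_range_sub (fun n => g (prefixes n)), huniv, hempty]

section PermClause

variable {m : ℕ} (π : Equiv.Perm (Fin m))

theorem image_Iic_eq_insert_image_Iio (j : Fin m) :
    (Iic j).image π = insert (π j) ((Iio j).image π) := by
  rw [← Iio_insert, image_insert]

theorem apply_notMem_image_Iio (j : Fin m) : π j ∉ (Iio j).image π := by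
  simp [π.injective.eq_iff]

theorem sum_image_Iic_sub_image_Iio {G : Type*} [AddCommGroup G] (g : Finset (Fin m) → G) :
    ∑ j : Fin m, (g ((Iic j).image π) - g ((Iio j).image π)) = g univ - g ∅ := by
  rw [Fin.sum_Iic_sub_Iio (fun S => g (S.image π)), image_univ_of_surjective π.surjective,
    image_empty]

theorem sum_filter_sub_inter (v : Finset (Fin m) → ℝ) (A : Finset (Fin m)) :
    ∑ j ∈ univ.filter (fun j => π j ∈ A),
      (v ((Iic j).image π ∩ A) - v ((Iio j).image π ∩ A)) = v A - v ∅ := by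
  rw [sum_filter_of_ne, sum_image_Iic_sub_image_Iio π (fun S => v (S ∩ A)), univ_inter,
    empty_inter]
  intro j _ hj
  by_contra hjA
  rw [image_Iic_eq_insert_image_Iio, insert_inter_of_notMem hjA, sub_self] at hj
  exact hj rfl

theorem permClause_le {v : Finset (Fin m) → ℝ} (hv : IsSubmodular v) (A : Finset (Fin m)) :
    permClause v π A ≤ v A - v ∅ := by
  rw [permClause, ← sum_filter_sub_inter π v A]
  refine sum_le_sum fun j hj => ?_
  rw [mem_filter] at hj
  rw [image_Iic_eq_insert_image_Iio, insert_inter_of_mem hj.2]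
  exact hv.insert_sub_le_insert_sub inter_subset_left (apply_notMem_image_Iio π j)

theorem permClause_eq_of_isLowerSet_preimage (v : Finset (Fin m) → ℝ) {A : Finset (Fin m)}
    (hA : IsLowerSet (π ⁻¹' A)) :
    permClause v π A = v A - v ∅ := by
  rw [permClause, ← sum_filter_sub_inter π v A]
  refine sum_congr rfl fun j hj => ?_
  rw [mem_filter] at hj
  have hIic : (Iic j).image π ⊆ A := by
    simpa [subset_iff] using fun i hij => hA hij hj.2
  have hIio : (Iio j).image π ⊆ A := (image_subset_image Iio_subset_Iic_self).trans hIic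
  rw [inter_eq_left.mpr hIic, inter_eq_left.mpr hIio]

end PermClause

theorem exists_perm_isLowerSet_preimage {m : ℕ} (A : Finset (Fin m)) :
    ∃ π : Equiv.Perm (Fin m), IsLowerSet (π ⁻¹' A) := by
  have hcard : #{i : Fin m | (i : ℕ) < #A} = #A := by
    rw [Fin.card_filter_val_lt, min_eq_right (card_le_univ A |>.trans_eq (Fintype.card_fin m))]
  obtain ⟨π, hπ⟩ := Equiv.Perm.exists_map_finset_eq _ A hcard
  have hmem (j : Fin m) : π j ∈ A ↔ (j : ℕ) < #A := by
    conv_lhs => rw [← hπ, mem_map_equiv, Equiv.symm_apply_apply, mem_filter_univ]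
  exact ⟨π, fun i j hji hi => (hmem j).mpr (lt_of_le_of_lt hji ((hmem i).mp hi))⟩

theorem submodular_is_xos_of_perm_clauses_general
    {m : ℕ} (v : Finset (Fin m) → ℝ)
    (h0 : v ∅ = 0)
    (hsub : ∀ A B : Finset (Fin m), v (A ∪ B) + v (A ∩ B) ≤ v A + v B) :
    ∀ A : Finset (Fin m),
      (∀ π : Equiv.Perm (Fin m), permClause v π A ≤ v A) ∧
      (∃ π : Equiv.Perm (Fin m), permClause v π A = v A) := by
  intro A
  obtain ⟨π, hπ⟩ := exists_perm_isLowerSet_preimage A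
  refine ⟨fun σ => by simpa [h0] using permClause_le σ hsub A, π, ?_⟩
  rw [permClause_eq_of_isLowerSet_preimage π v hπ, h0, sub_zero]

/-- every submodular valuation is the XOR (pointwise max) of the
additive clauses associated with the permutations of the items: each clause
values every set `A` at most `v(A)`, and some clause (one placing the elements
of `A` first) attains exactly `v(A)`. -/
theorem submodular_is_xos_of_perm_clauses
    {m : ℕ} (v : Finset (Fin m) → ℝ)
    (h0 : v ∅ = 0)
    (hmono : ∀ A B : Finset (Fin m), A ⊆ B → v A ≤ v B)
    (hnn : ∀ A : Finset (Fin m), 0 ≤ v A)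
    (hsub : ∀ A B : Finset (Fin m), v (A ∪ B) + v (A ∩ B) ≤ v A + v B) :
    ∀ A : Finset (Fin m),
      (∀ π : Equiv.Perm (Fin m), permClause v π A ≤ v A) ∧
      (∃ π : Equiv.Perm (Fin m), permClause v π A = v A) :=
  submodular_is_xos_of_perm_clauses_general v h0 hsub
end

section
/- The valuation on three items given by v(S)=2 if |S|=1, v(S)=3 if |S|=2, v(S)=5 if |S|=3 (and v(∅)=0) is complement-free but cannot be expressed as a maximum of finitely many additive clauses (i.e., it is not an XOS valuation). -/
/-! The valuation is a function of the cardinality only, and the cardinality profile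
`0, 2, 3, 5` is subadditive in the range allowed by `|A ∪ B| ≤ |A| + |B|`. It is not XOS:
a clause attaining `v(X) = 5` is dominated by `v` on each of the three pairs, and since every
item lies in exactly two pairs, summing gives `2 · 5 ≤ 3 · 3`. -/

open Finset

variable {α : Type*}

def ComplementFree [DecidableEq α] (v : Finset α → ℝ) : Prop :=
  ∀ A B : Finset α, v (A ∪ B) ≤ v A + v B

def IsXOS (v : Finset α → ℝ) : Prop :=
  ∃ (n : ℕ) (p : Fin (n + 1) → α → ℝ), (∀ k x, 0 ≤ p k x) ∧
    ∀ S : Finset α, v S = univ.sup' univ_nonempty (fun k => ∑ x ∈ S, p k x)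

variable [Fintype α] [DecidableEq α]

theorem complementFree_of_card {v : Finset α → ℝ} (f : ℕ → ℝ) (hv : ∀ S, v S = f #S)
    (hf : ∀ a b c, a ≤ c → b ≤ c → c ≤ a + b → c ≤ Fintype.card α → f c ≤ f a + f b) :
    ComplementFree v := by
  intro A B
  simp only [hv]
  exact hf _ _ _ (card_le_card subset_union_left) (card_le_card subset_union_right)
    (card_union_le A B) (card_le_univ _)

theorem sum_card_filter_mem_mul (𝒮 : Finset (Finset α)) (g : α → ℝ) :
    ∑ x, #{S ∈ 𝒮 | x ∈ S} * g x = ∑ S ∈ 𝒮, ∑ x ∈ S, g x := by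
  rw [sum_comm' (t' := univ) (s' := fun x => {S ∈ 𝒮 | x ∈ S}) (by simp)]
  simp

theorem IsXOS.mul_le_sum_of_cover {v : Finset α → ℝ} (hv : IsXOS v) (𝒮 : Finset (Finset α))
    (m : ℕ) (h𝒮 : ∀ x, m ≤ #{S ∈ 𝒮 | x ∈ S}) : m * v univ ≤ ∑ S ∈ 𝒮, v S := by
  obtain ⟨n, p, hp, hvp⟩ := hv
  obtain ⟨k, -, hk⟩ := exists_mem_eq_sup' univ_nonempty (fun k => ∑ x, p k x)
  have clause_le (S : Finset α) : ∑ x ∈ S, p k x ≤ v S := by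
    rw [hvp]; exact le_sup' (fun k => ∑ x ∈ S, p k x) (mem_univ k)
  calc m * v univ = ∑ x, m * p k x := by rw [hvp, hk, mul_sum]
    _ ≤ ∑ x, #{S ∈ 𝒮 | x ∈ S} * p k x :=
        sum_le_sum fun x _ => mul_le_mul_of_nonneg_right (by exact_mod_cast h𝒮 x) (hp k x)
    _ = ∑ S ∈ 𝒮, ∑ x ∈ S, p k x := sum_card_filter_mem_mul 𝒮 (p k)
    _ ≤ ∑ S ∈ 𝒮, v S := sum_le_sum fun S _ => clause_le S

/-- The valuation on three items with `v(S)=2,3,5` for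
`|S|=1,2,3` (and `v(∅)=0`) is complement-free but is not an XOS valuation
(it is not the maximum of finitely many nonnegative additive clauses). -/
theorem cf_not_xos_example
    (v : Finset (Fin 3) → ℝ)
    (hv : ∀ S : Finset (Fin 3),
      v S = if S.card = 1 then 2 else if S.card = 2 then 3 else
            if S.card = 3 then 5 else 0) :
    (∀ A B : Finset (Fin 3), v (A ∪ B) ≤ v A + v B) ∧
    ¬ (∃ (n : ℕ) (p : Fin (n + 1) → Fin 3 → ℝ),
        (∀ k x, 0 ≤ p k x) ∧
        ∀ S : Finset (Fin 3),
          v S = Finset.univ.sup' Finset.univ_nonempty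
            (fun k => ∑ x ∈ S, p k x)) := by
  show ComplementFree v ∧ ¬ IsXOS v
  constructor
  · refine complementFree_of_card
      (fun c => if c = 1 then 2 else if c = 2 then 3 else if c = 3 then 5 else 0) hv
      fun a b c hac hbc hab hc => ?_
    simp only [Fintype.card_fin] at hc
    interval_cases c <;> interval_cases a <;> interval_cases b <;> norm_num at *
  · intro hxos
    have hcover := IsXOS.mul_le_sum_of_cover hxos (powersetCard 2 univ) 2 (by decide)
    have hpairs : ∑ S ∈ powersetCard 2 univ, v S = 3 * 3 := by
      rw [sum_congr rfl fun S hS => by rw [hv, (mem_powersetCard.1 hS).2]]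
      simp
    rw [hpairs, hv] at hcover
    norm_num at hcover
end

section
/- Greedy 2-approximation for submodular valuations: given submodular valuations v₁,…,vₙ on a finite set X of m items, the greedy algorithm that processes items in a fixed order, assigning each item x to a bidder j maximizing the current marginal value vⱼ(x | Sⱼ) (where Sⱼ is the set already assigned to j), yields an allocation (S₁,…,Sₙ) with Σⱼ vⱼ(Sⱼ) ≥ (1/2)·max over all partitions (T₁,…,Tₙ) of X of Σⱼ vⱼ(Tⱼ). -/
/-!
Write `gain x` for the marginal value that the greedy rule collects when it assigns item `x`;
these gains telescope to the greedy welfare `∑ⱼ vⱼ(Sⱼ)`. For any other allocation `T`,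
submodularity bounds `vⱼ(Tⱼ) ≤ vⱼ(Sⱼ ∪ Tⱼ)` by `vⱼ(Sⱼ)` plus the marginals `vⱼ(x | Sⱼ)`,
`x ∈ Tⱼ`. Diminishing returns and the greedy choice bound each of these by `gain x`, since
`x` was assigned when bidder `j` held only part of `Sⱼ`. Summing over `j`, the gains over the
partition `T` add up to the greedy welfare once more, so the optimum is at most twice it.
-/

open Finset

variable {α : Type*} [DecidableEq α]

def marginal (v : Finset α → ℝ) (S : Finset α) (x : α) : ℝ :=
  v (insert x S) - v S

theorem marginal_anti (v : Finset α → ℝ) (hmono : Monotone v)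
    (hsub : ∀ A B, v (A ∪ B) + v (A ∩ B) ≤ v A + v B)
    {C D : Finset α} (hCD : C ⊆ D) (x : α) :
    marginal v D x ≤ marginal v C x := by
  unfold marginal
  by_cases hx : x ∈ D
  · have : v C ≤ v (insert x C) := hmono (subset_insert x C)
    rw [insert_eq_of_mem hx]
    linarith
  · have h := hsub (insert x C) D
    rw [insert_union, union_eq_right.2 hCD, insert_inter_of_notMem hx,
      inter_eq_left.2 hCD] at h
    linarith

theorem le_add_sum_marginal (v : Finset α → ℝ) (hmono : Monotone v)
    (hsub : ∀ A B, v (A ∪ B) + v (A ∩ B) ≤ v A + v B) (B A : Finset α) :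
    v (B ∪ A) ≤ v B + ∑ x ∈ A, marginal v B x := by
  induction A using Finset.induction with
  | empty => simp
  | insert a A ha ih =>
    have := marginal_anti v hmono hsub ((subset_union_left (s₁ := B) (s₂ := A))) a
    rw [sum_insert ha, union_insert]
    unfold marginal at this ih ⊢
    linarith

theorem sub_empty_eq_sum_marginal [LinearOrder α] (v : Finset α → ℝ) (s : Finset α) :
    v s - v ∅ = ∑ x ∈ s, marginal v {y ∈ s | y < x} x := by
  induction s using Finset.induction_on_max with
  | empty => simp
  | insert a s hlt ih =>
    have ha : a ∉ s := fun h => lt_irrefl a (hlt a h)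
    have hbelow : ∀ x ∈ s, {y ∈ insert a s | y < x} = {y ∈ s | y < x} := fun x hx => by
      rw [filter_insert, if_neg (hlt x hx).not_gt]
    rw [sum_insert ha, sum_congr rfl fun x hx => by rw [hbelow x hx], ← ih, filter_insert,
      if_neg (lt_irrefl a), filter_true_of_mem hlt]
    unfold marginal
    ring

theorem sum_value_fiber_eq_sum_marginal [Fintype α] [LinearOrder α]
    {ι : Type*} [Fintype ι] [DecidableEq ι] (v : ι → Finset α → ℝ) (h0 : ∀ j, v j ∅ = 0)
    (g : α → ι) :
    ∑ j, v j {y | g y = j} = ∑ x, marginal (v (g x)) {y | y < x ∧ g y = g x} x := by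
  rw [← sum_fiberwise univ g]
  refine sum_congr rfl fun j _ => ?_
  rw [← sub_zero (v j _), ← h0 j, sub_empty_eq_sum_marginal]
  refine sum_congr rfl fun x hx => ?_
  rw [(mem_filter.1 hx).2, filter_filter]
  simp only [and_comm]

theorem greedy_two_approx_submodular_general
    {m n : ℕ} (v : Fin n → Finset (Fin m) → ℝ)
    (h0 : ∀ j, v j ∅ = 0)
    (hmono : ∀ j, ∀ A B : Finset (Fin m), A ⊆ B → v j A ≤ v j B)
    (hsub : ∀ j, ∀ A B : Finset (Fin m),
      v j (A ∪ B) + v j (A ∩ B) ≤ v j A + v j B)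
    (g : Fin m → Fin n)
    (prev : Fin n → Fin m → Finset (Fin m))
    (hprev : ∀ j x, prev j x = Finset.univ.filter (fun y => y < x ∧ g y = j))
    (hgreedy : ∀ (x : Fin m) (j : Fin n),
      v j (insert x (prev j x)) - v j (prev j x) ≤
        v (g x) (insert x (prev (g x) x)) - v (g x) (prev (g x) x))
    (S : Fin n → Finset (Fin m))
    (hS : ∀ j, S j = Finset.univ.filter (fun y => g y = j)) :
    ∀ T : Fin n → Finset (Fin m),
      (∀ i j, i ≠ j → Disjoint (T i) (T j)) →
      Finset.univ.biUnion T = Finset.univ →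
      ∑ j, v j (T j) ≤ 2 * ∑ j, v j (S j) := by
  intro T hdisj hcover
  set gain : Fin m → ℝ := fun x => marginal (v (g x)) (prev (g x) x) x
  have hmonotone : ∀ j, Monotone (v j) := fun j A B => hmono j A B
  have hwelfare : ∑ j, v j (S j) = ∑ x, gain x := by
    simp only [hS, gain, hprev]
    exact sum_value_fiber_eq_sum_marginal v h0 g
  have hbidder : ∀ j, v j (T j) ≤ v j (S j) + ∑ x ∈ T j, gain x := fun j =>
    calc v j (T j) ≤ v j (S j ∪ T j) := hmonotone j subset_union_right
      _ ≤ v j (S j) + ∑ x ∈ T j, marginal (v j) (S j) x :=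
        le_add_sum_marginal (v j) (hmonotone j) (hsub j) _ _
      _ ≤ v j (S j) + ∑ x ∈ T j, gain x := by
        gcongr with x
        have hprev_sub : prev j x ⊆ S j := by
          rw [hprev, hS]
          intro y; simp +contextual
        exact (marginal_anti (v j) (hmonotone j) (hsub j) hprev_sub x).trans (hgreedy x j)
  have hpartition : ∑ j, ∑ x ∈ T j, gain x = ∑ x, gain x := by
    rw [← sum_biUnion fun i _ j _ hij => hdisj i j hij, hcover]
  calc ∑ j, v j (T j) ≤ ∑ j, (v j (S j) + ∑ x ∈ T j, gain x) := sum_le_sum fun j _ => hbidder j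
    _ = 2 * ∑ j, v j (S j) := by rw [sum_add_distrib, hpartition, ← hwelfare]; ring

/-- the greedy algorithm, which processes the items of
`X = Fin m` in increasing order and gives each item `x` to a bidder `g x`
whose current marginal value for `x` is largest, produces an allocation
whose total value is at least half the optimum, when all valuations are
submodular.  Here `prev j x` is the set of items assigned to bidder `j`
before item `x` is processed, and `S j` is bidder `j`'s final bundle. -/
theorem greedy_two_approx_submodular
    {m n : ℕ} (v : Fin n → Finset (Fin m) → ℝ)
    (h0 : ∀ j, v j ∅ = 0)
    (hmono : ∀ j, ∀ A B : Finset (Fin m), A ⊆ B → v j A ≤ v j B)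
    (hnn : ∀ j, ∀ A : Finset (Fin m), 0 ≤ v j A)
    (hsub : ∀ j, ∀ A B : Finset (Fin m),
      v j (A ∪ B) + v j (A ∩ B) ≤ v j A + v j B)
    (g : Fin m → Fin n)
    (prev : Fin n → Fin m → Finset (Fin m))
    (hprev : ∀ j x, prev j x = Finset.univ.filter (fun y => y < x ∧ g y = j))
    (hgreedy : ∀ (x : Fin m) (j : Fin n),
      v j (insert x (prev j x)) - v j (prev j x) ≤
        v (g x) (insert x (prev (g x) x)) - v (g x) (prev (g x) x))
    (S : Fin n → Finset (Fin m))
    (hS : ∀ j, S j = Finset.univ.filter (fun y => g y = j)) :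
    ∀ T : Fin n → Finset (Fin m),
      (∀ i j, i ≠ j → Disjoint (T i) (T j)) →
      Finset.univ.biUnion T = Finset.univ →
      ∑ j, v j (T j) ≤ 2 * ∑ j, v j (S j) :=
  greedy_two_approx_submodular_general v h0 hmono hsub g prev hprev hgreedy S hS
end

section
/- Equivalent characterizations of a-submodularity: for a real number a ≥ 1, a valuation v satisfies a·v(x|S) ≥ v(x|T) for all x ∉ T and S ⊆ T (where v(x|S) = v(S∪{x})−v(S)) if and only if v(A) + a·v(B) ≥ v(A∪B) + a·v(A∩B) for all sets A, B with A∩B ⊆ A (i.e., for all A,B). -/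
/-!
Add the elements of `B \ A` one at a time to both `A ∩ B` and `A`: the gain of each element on the
larger set is at most `a` times its gain on the smaller one, and the gains telescope to the lattice
inequality. Conversely,
the lattice inequality for `A = T` and `B = insert x S` is exactly the marginal inequality.
-/

namespace Finset

variable {X : Type*} [DecidableEq X] {a : ℝ} {v : Finset X → ℝ}

theorem sub_le_mul_sub_of_union_disjoint
    (hmarg : ∀ (S T : Finset X) (x : X), S ⊆ T → x ∉ T →
      v (insert x T) - v T ≤ a * (v (insert x S) - v S))
    (D : Finset X) {S T : Finset X} (hST : S ⊆ T) (hDT : Disjoint D T) :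
    v (T ∪ D) - v T ≤ a * (v (S ∪ D) - v S) := by
  induction D using Finset.induction_on with
  | empty => simp
  | insert x D hxD ih =>
    obtain ⟨hxT, hDT⟩ := disjoint_insert_left.mp hDT
    have hstep := hmarg (S ∪ D) (T ∪ D) x (union_subset_union_left hST)
      (by simp [hxT, hxD])
    have hprev := ih hDT
    rw [union_insert, union_insert]
    linarith

theorem union_add_mul_inter_le_of_marginal
    (hmarg : ∀ (S T : Finset X) (x : X), S ⊆ T → x ∉ T →
      v (insert x T) - v T ≤ a * (v (insert x S) - v S))
    (A B : Finset X) :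
    v (A ∪ B) + a * v (A ∩ B) ≤ v A + a * v B := by
  have h := sub_le_mul_sub_of_union_disjoint hmarg (B \ A) (inter_subset_left (s₂ := B))
    sdiff_disjoint
  rw [union_sdiff_self_eq_union, inter_comm A B, union_comm (B ∩ A), sdiff_union_inter,
    inter_comm B A] at h
  linarith

theorem marginal_of_union_add_mul_inter_le
    (hlat : ∀ A B : Finset X, v (A ∪ B) + a * v (A ∩ B) ≤ v A + a * v B)
    {S T : Finset X} {x : X} (hST : S ⊆ T) (hxT : x ∉ T) :
    v (insert x T) - v T ≤ a * (v (insert x S) - v S) := by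
  have h := hlat T (insert x S)
  rw [union_insert, union_eq_left.mpr hST, inter_insert_of_notMem hxT,
    inter_eq_right.mpr hST] at h
  linarith

end Finset

theorem aSubmodular_characterizations_general
    {X : Type*} [DecidableEq X]
    (a : ℝ)
    (v : Finset X → ℝ) :
    (∀ (S T : Finset X) (x : X), S ⊆ T → x ∉ T →
      v (insert x T) - v T ≤ a * (v (insert x S) - v S)) ↔
    (∀ A B : Finset X, v (A ∪ B) + a * v (A ∩ B) ≤ v A + a * v B) :=
  ⟨Finset.union_add_mul_inter_le_of_marginal,
    fun hlat _ _ _ ↦ Finset.marginal_of_union_add_mul_inter_le hlat⟩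

/-- equivalent characterizations of `a`-submodularity, for
`a ≥ 1`: `a·v(x|S) ≥ v(x|T)` for all `S ⊆ T`, `x ∉ T` iff
`v(A) + a·v(B) ≥ v(A∪B) + a·v(A∩B)` for all `A, B`. -/
theorem aSubmodular_characterizations
    {X : Type*} [DecidableEq X] [Fintype X]
    (a : ℝ) (ha : 1 ≤ a)
    (v : Finset X → ℝ)
    (h0 : v ∅ = 0)
    (hmono : ∀ A B : Finset X, A ⊆ B → v A ≤ v B)
    (hnn : ∀ A : Finset X, 0 ≤ v A) :
    (∀ (S T : Finset X) (x : X), S ⊆ T → x ∉ T →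
      v (insert x T) - v T ≤ a * (v (insert x S) - v S)) ↔
    (∀ A B : Finset X, v (A ∪ B) + a * v (A ∩ B) ≤ v A + a * v B) :=
  aSubmodular_characterizations_general a v
end
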